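/- arXiv:2203.10190 — 9 statements merged into one kernel-verified Lean document; each statement's English description precedes it below -/
import Mathlib

section
/- Let W be a nonempty set, Z a positive integer, B > 0, ν ≥ 0, F : W → ℝ, and r : W → ℝ^Z, and let G(w, λ) = F(w) + ∑_{j=1}^Z λ_j r_j(w) for λ ∈ Λ_B. If (w̄, λ̄) ∈ W × Λ_B is a ν-approximate saddle point of G, then ∑_{j=1}^Z λ̄_j r_j(w̄) ≥ B · max_{1 ≤ j ≤ Z} (r_j(w̄))₊ − ν. -/
/-- Lemma 1 of Agarwal et al. (as used in the paper): at a ν-approximate saddle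
point `(w̄, λ̄)` of the Lagrangian `G(w, λ) = F w + ∑ j, λ j * r w j` over
`Λ_B = {λ : ∀ j, 0 ≤ λ j ∧ ∑ j, λ j ≤ B}`, the penalty term satisfies
`∑ j, λ̄ j * r w̄ j ≥ B * max_j (r w̄ j)₊ − ν`. -/
theorem stmt_0 {W : Type*} [Nonempty W] {Z : ℕ} (hZ : 0 < Z)
    {B ν : ℝ} (hB : 0 < B) (hν : 0 ≤ ν)
    (F : W → ℝ) (r : W → Fin Z → ℝ)
    (G : W → (Fin Z → ℝ) → ℝ)
    (hG : ∀ w lam, G w lam = F w + ∑ j, lam j * r w j)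
    (wbar : W) (lambar : Fin Z → ℝ)
    (hlambar_nonneg : ∀ j, 0 ≤ lambar j)
    (hlambar_sum : ∑ j, lambar j ≤ B)
    (hsaddle₁ : ∀ w : W, G wbar lambar ≤ G w lambar + ν)
    (hsaddle₂ : ∀ lam : Fin Z → ℝ, (∀ j, 0 ≤ lam j) → (∑ j, lam j ≤ B) →
      G wbar lambar ≥ G wbar lam - ν) :
    ∑ j, lambar j * r wbar j ≥
      B * Finset.univ.sup' (Finset.univ_nonempty_iff.mpr ⟨⟨0, hZ⟩⟩)
        (fun j => max (r wbar j) 0) - ν := by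
  obtain ⟨j₀, -, hj₀⟩ := Finset.exists_mem_eq_sup' (Finset.univ_nonempty_iff.mpr ⟨⟨0, hZ⟩⟩)
      (fun j => max (r wbar j) 0)
  rw [hj₀]
  rcases le_or_gt (r wbar j₀) 0 with h | h
  · rw [max_eq_right h, mul_zero]
    have h2 := hsaddle₂ (fun _ => 0) (fun j => le_refl 0) (by simp [hB.le])
    rw [hG, hG] at h2
    simp at h2
    linarith
  · rw [max_eq_left h.le]
    set lam : Fin Z → ℝ := fun j => if j = j₀ then B else 0 with hlam
    have h2 := hsaddle₂ lam (fun j => by by_cases hj : j = j₀ <;> simp [hlam, hj, hB.le])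
      (by simp [hlam])
    rw [hG, hG] at h2
    have hsum : ∑ j, lam j * r wbar j = B * r wbar j₀ := by
      simp [hlam, Finset.sum_ite_eq']
    rw [hsum] at h2
    linarith
end

section
/- Let W be a nonempty set, Z a positive integer, B > 0, ν ≥ 0, F : W → ℝ, and r : W → ℝ^Z, and let G(w, λ) = F(w) + ∑_{j=1}^Z λ_j r_j(w) for λ ∈ Λ_B. If (w̄, λ̄) ∈ W × Λ_B is a ν-approximate saddle point of G, then for every w ∈ W satisfying r_j(w) ≤ 0 for all j = 1, …, Z, one has F(w̄) ≤ F(w) + 2ν. -/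
/-- Lemma 2 of Agarwal et al. (as used in the paper): at a ν-approximate saddle
point `(w̄, λ̄)` of `G(w, λ) = F w + ∑ j, λ j * r w j` over `Λ_B`, for every
feasible `w` (i.e. `r w j ≤ 0` for all `j`) one has `F w̄ ≤ F w + 2ν`. -/
theorem stmt_1 {W : Type*} [Nonempty W] {Z : ℕ} (hZ : 0 < Z)
    {B ν : ℝ} (hB : 0 < B) (hν : 0 ≤ ν)
    (F : W → ℝ) (r : W → Fin Z → ℝ)
    (G : W → (Fin Z → ℝ) → ℝ)
    (hG : ∀ w lam, G w lam = F w + ∑ j, lam j * r w j)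
    (wbar : W) (lambar : Fin Z → ℝ)
    (hlambar_nonneg : ∀ j, 0 ≤ lambar j)
    (hlambar_sum : ∑ j, lambar j ≤ B)
    (hsaddle₁ : ∀ w : W, G wbar lambar ≤ G w lambar + ν)
    (hsaddle₂ : ∀ lam : Fin Z → ℝ, (∀ j, 0 ≤ lam j) → (∑ j, lam j ≤ B) →
      G wbar lambar ≥ G wbar lam - ν) :
    ∀ w : W, (∀ j, r w j ≤ 0) → F wbar ≤ F w + 2 * ν := by
  intro w hw
  have h0 := hsaddle₂ 0 (fun j => le_refl 0) (by simpa using hB.le)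
  have h1 := hsaddle₁ w
  simp only [hG] at h0 h1
  simp only [Pi.zero_apply, zero_mul, Finset.sum_const_zero, add_zero] at h0
  have hsum : ∑ j, lambar j * r w j ≤ 0 :=
    Finset.sum_nonpos fun j _ => mul_nonpos_of_nonneg_of_nonpos (hlambar_nonneg j) (hw j)
  linarith
end

section
/- Let W be a nonempty set, Z a positive integer, B > 0, ν ≥ 0, F : W → ℝ, and r : W → ℝ^Z, and let G(w, λ) = F(w) + ∑_{j=1}^Z λ_j r_j(w) for λ ∈ Λ_B. If (w̄, λ̄) ∈ W × Λ_B is a ν-approximate saddle point of G, then for every w* ∈ W satisfying r_j(w*) ≤ 0 for all j, one has B · max_{1 ≤ j ≤ Z} (r_j(w̄))₊ ≤ F(w*) − F(w̄) + 2ν. -/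
/-- At a ν-approximate saddle point `(w̄, λ̄)` of
`G(w, λ) = F w + ∑ j, λ j * r w j` over `Λ_B`, for every feasible `w*`
(`r w* j ≤ 0` for all `j`) one has
`B * max_j (r w̄ j)₊ ≤ F w* − F w̄ + 2ν`. -/
theorem stmt_2 {W : Type*} [Nonempty W] {Z : ℕ} (hZ : 0 < Z)
    {B ν : ℝ} (hB : 0 < B) (hν : 0 ≤ ν)
    (F : W → ℝ) (r : W → Fin Z → ℝ)
    (G : W → (Fin Z → ℝ) → ℝ)
    (hG : ∀ w lam, G w lam = F w + ∑ j, lam j * r w j)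
    (wbar : W) (lambar : Fin Z → ℝ)
    (hlambar_nonneg : ∀ j, 0 ≤ lambar j)
    (hlambar_sum : ∑ j, lambar j ≤ B)
    (hsaddle₁ : ∀ w : W, G wbar lambar ≤ G w lambar + ν)
    (hsaddle₂ : ∀ lam : Fin Z → ℝ, (∀ j, 0 ≤ lam j) → (∑ j, lam j ≤ B) →
      G wbar lambar ≥ G wbar lam - ν) :
    ∀ wstar : W, (∀ j, r wstar j ≤ 0) →
      B * Finset.univ.sup' (Finset.univ_nonempty_iff.mpr ⟨⟨0, hZ⟩⟩)
          (fun j => max (r wbar j) 0)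
        ≤ F wstar - F wbar + 2 * ν := by
  intro wstar hfeas
  have hne : (Finset.univ : Finset (Fin Z)).Nonempty :=
    Finset.univ_nonempty_iff.mpr ⟨⟨0, hZ⟩⟩
  -- upper bound: G wbar lambar ≤ F wstar + ν
  have hupper : F wbar + ∑ j, lambar j * r wbar j ≤ F wstar + ν := by
    have := hsaddle₁ wstar
    simp only [hG] at this
    have hsum : ∑ j, lambar j * r wstar j ≤ 0 :=
      Finset.sum_nonpos fun j _ =>
        mul_nonpos_of_nonneg_of_nonpos (hlambar_nonneg j) (hfeas j)
    linarith
  obtain ⟨j₀, _, hj₀⟩ := Finset.exists_mem_eq_sup' hne (fun j => max (r wbar j) 0)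
  rw [hj₀]
  by_cases hpos : 0 ≤ r wbar j₀
  · rw [max_eq_left hpos]
    set lam : Fin Z → ℝ := fun j => if j = j₀ then B else 0 with hlam
    have hnn : ∀ j, 0 ≤ lam j := by
      intro j; simp only [hlam]; split <;> [exact hB.le; rfl]
    have hsum : ∑ j, lam j ≤ B := by
      simp [hlam, Finset.sum_ite_eq']
    have hlow := hsaddle₂ lam hnn hsum
    simp only [hG] at hlow
    have : ∑ j, lam j * r wbar j = B * r wbar j₀ := by
      simp [hlam, ite_mul, Finset.sum_ite_eq']
    rw [this] at hlow
    linarith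
  · rw [max_eq_right (le_of_not_ge hpos), mul_zero]
    have hlow := hsaddle₂ (fun _ => 0) (fun _ => le_refl 0)
      (by simpa using hB.le)
    simp only [hG] at hlow
    simp at hlow
    linarith
end

section
/- (Empirical Fairness Guarantee, Lemma 2 of the paper.) Let W be a nonempty set, Z a positive integer, B > 0, ν ≥ 0, M > 0, F : W → ℝ with 0 ≤ F(w) ≤ M for all w ∈ W, and r : W → ℝ^Z, and let G(w, λ) = F(w) + ∑_{j=1}^Z λ_j r_j(w) for λ ∈ Λ_B. If (w̄, λ̄) ∈ W × Λ_B is a ν-approximate saddle point of G and there exists w* ∈ W with r_j(w*) ≤ 0 for all j, then max_{1 ≤ j ≤ Z} (r_j(w̄))₊ ≤ (M + 2ν)/B. -/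
/-- Empirical Fairness Guarantee (Lemma 2 of the paper): if `(w̄, λ̄)` is a
ν-approximate saddle point of `G(w, λ) = F w + ∑ j, λ j * r w j` over `Λ_B`,
`0 ≤ F ≤ M`, and there is a feasible `w*` with `r w* j ≤ 0` for all `j`, then
`max_j (r w̄ j)₊ ≤ (M + 2ν)/B`. -/
theorem stmt_3 {W : Type*} [Nonempty W] {Z : ℕ} (hZ : 0 < Z)
    {B ν M : ℝ} (hB : 0 < B) (hν : 0 ≤ ν) (hM : 0 < M)
    (F : W → ℝ) (hF_nonneg : ∀ w, 0 ≤ F w) (hF_le : ∀ w, F w ≤ M)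
    (r : W → Fin Z → ℝ)
    (G : W → (Fin Z → ℝ) → ℝ)
    (hG : ∀ w lam, G w lam = F w + ∑ j, lam j * r w j)
    (wbar : W) (lambar : Fin Z → ℝ)
    (hlambar_nonneg : ∀ j, 0 ≤ lambar j)
    (hlambar_sum : ∑ j, lambar j ≤ B)
    (hsaddle₁ : ∀ w : W, G wbar lambar ≤ G w lambar + ν)
    (hsaddle₂ : ∀ lam : Fin Z → ℝ, (∀ j, 0 ≤ lam j) → (∑ j, lam j ≤ B) →
      G wbar lambar ≥ G wbar lam - ν)
    (hfeas : ∃ wstar : W, ∀ j, r wstar j ≤ 0) :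
    Finset.univ.sup' (Finset.univ_nonempty_iff.mpr ⟨⟨0, hZ⟩⟩)
        (fun j => max (r wbar j) 0)
      ≤ (M + 2 * ν) / B := by
  obtain ⟨ws, hws⟩ := hfeas
  have hRHS : 0 ≤ (M + 2 * ν) / B := by positivity
  -- upper bound on G wbar lambar
  have hub : G wbar lambar ≤ M + ν := by
    have h1 := hsaddle₁ ws
    have h2 : G ws lambar ≤ M := by
      rw [hG]
      have hsum : (∑ j, lambar j * r ws j) ≤ 0 :=
        Finset.sum_nonpos fun j _ => mul_nonpos_of_nonneg_of_nonpos (hlambar_nonneg j) (hws j)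
      linarith [hF_le ws]
    linarith
  apply Finset.sup'_le
  intro j _
  rcases le_or_gt (r wbar j) 0 with h | h
  · simpa [max_eq_right h] using hRHS
  · rw [max_eq_left h.le]
    -- use lam = B * e_j
    set lam : Fin Z → ℝ := fun i => if i = j then B else 0 with hlam
    have hlb := hsaddle₂ lam (fun i => by by_cases hi : i = j <;> simp [hlam, hi, hB.le])
      (by simp [hlam])
    have hGlam : G wbar lam = F wbar + B * r wbar j := by
      rw [hG]
      congr 1
      rw [Finset.sum_eq_single j]
      · simp [hlam]
      · intro i _ hi; simp [hlam, hi]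
      · simp
    rw [hGlam] at hlb
    rw [le_div_iff₀ hB]
    rw [mul_comm]; linarith [hF_nonneg wbar]
end

section
/- (Full Fairness and Generalization Guarantee, Theorem 2 of the paper, deterministic form.) Let W be a nonempty set, Z a positive integer, B > 0, ν ≥ 0, M > 0, F : W → ℝ with 0 ≤ F(w) ≤ M for all w ∈ W, and r : W → ℝ^Z, and let G(w, λ) = F(w) + ∑_{j=1}^Z λ_j r_j(w) for λ ∈ Λ_B. Let 𝓕 : W → ℝ (the population risk) and 𝔯 : W → ℝ^Z (the population fairness constraints). Suppose (w̄, λ̄) ∈ W × Λ_B is a ν-approximate saddle point of G, w* ∈ W satisfies r_j(w*) ≤ 0 for all j, and there are ε ≥ 0 and ε_1, …, ε_Z ≥ 0 such that |𝓕(w̄) − F(w̄)| ≤ ε, |𝓕(w*) − F(w*)| ≤ ε, and 𝔯_j(w̄) − r_j(w̄) ≤ ε_j for every j. Then 𝓕(w̄) ≤ 𝓕(w*) + 2ν + 2ε and, for every j = 1, …, Z, 𝔯_j(w̄) ≤ (M + 2ν)/B + ε_j. (In the paper, ε = 2ℜ_m(𝓗) + (M/K)√(∑_k log(2/δ)/(2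 m_k)) and ε_j = Gen_{r,j} are the Rademacher-complexity generalization errors, which hold with probability 1 − δ.) -/
/-- Full Fairness and Generalization Guarantee (Theorem 2 of the paper,
deterministic form): if `(w̄, λ̄)` is a ν-approximate saddle point of the
empirical Lagrangian `G(w, λ) = F w + ∑ j, λ j * r w j` over `Λ_B`, `0 ≤ F ≤ M`,
`w*` is feasible for the empirical constraints, and the population quantities
`𝓕`, `𝔯` deviate from the empirical ones by at most `ε` and `εr j`
respectively, then `𝓕 w̄ ≤ 𝓕 w* + 2ν + 2ε` and
`𝔯 w̄ j ≤ (M + 2ν)/B + εr j` for every `j`. -/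
theorem stmt_4 {W : Type*} [Nonempty W] {Z : ℕ} (hZ : 0 < Z)
    {B ν M ε : ℝ} (hB : 0 < B) (hν : 0 ≤ ν) (hM : 0 < M) (hε : 0 ≤ ε)
    (F : W → ℝ) (hF_nonneg : ∀ w, 0 ≤ F w) (hF_le : ∀ w, F w ≤ M)
    (r : W → Fin Z → ℝ)
    (G : W → (Fin Z → ℝ) → ℝ)
    (hG : ∀ w lam, G w lam = F w + ∑ j, lam j * r w j)
    (𝓕 : W → ℝ) (𝔯 : W → Fin Z → ℝ)
    (wbar : W) (lambar : Fin Z → ℝ)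
    (hlambar_nonneg : ∀ j, 0 ≤ lambar j)
    (hlambar_sum : ∑ j, lambar j ≤ B)
    (hsaddle₁ : ∀ w : W, G wbar lambar ≤ G w lambar + ν)
    (hsaddle₂ : ∀ lam : Fin Z → ℝ, (∀ j, 0 ≤ lam j) → (∑ j, lam j ≤ B) →
      G wbar lambar ≥ G wbar lam - ν)
    (wstar : W) (hfeas : ∀ j, r wstar j ≤ 0)
    (εr : Fin Z → ℝ) (hεr : ∀ j, 0 ≤ εr j)
    (hgen₁ : |𝓕 wbar - F wbar| ≤ ε)
    (hgen₂ : |𝓕 wstar - F wstar| ≤ ε)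
    (hgen₃ : ∀ j, 𝔯 wbar j - r wbar j ≤ εr j) :
    𝓕 wbar ≤ 𝓕 wstar + 2 * ν + 2 * ε ∧
      ∀ j, 𝔯 wbar j ≤ (M + 2 * ν) / B + εr j := by
  -- G(w̄,λ̄) ≤ F w* + ν
  have hGstar : G wbar lambar ≤ F wstar + ν := by
    have h1 := hsaddle₁ wstar
    have h2 : ∑ j, lambar j * r wstar j ≤ 0 := by
      apply Finset.sum_nonpos
      intro j _
      exact mul_nonpos_of_nonneg_of_nonpos (hlambar_nonneg j) (hfeas j)
    rw [hG wstar lambar] at h1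
    linarith
  have hGbar : G wbar lambar = F wbar + ∑ j, lambar j * r wbar j := hG _ _
  -- F w̄ ≤ G(w̄,λ̄) + ν (take λ = 0)
  have hFbar : F wbar ≤ G wbar lambar + ν := by
    have h := hsaddle₂ (fun _ => 0) (fun j => le_refl 0)
      (by simp [hB.le])
    simp only [hG] at h
    simp at h
    linarith
  have hgen₁' := abs_le.mp hgen₁
  have hgen₂' := abs_le.mp hgen₂
  constructor
  · linarith
  · intro j
    -- take λ = B·e_j
    have h := hsaddle₂ (fun i => if i = j then B else 0)
      (fun i => by positivity) (by simp)
    simp only [hG] at h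
    have hsum : ∑ i, (if i = j then B else 0) * r wbar i = B * r wbar j := by
      rw [Finset.sum_eq_single j]
      · simp
      · intro i _ hij; simp [hij]
      · simp
    rw [hsum] at h
    have hr : B * r wbar j ≤ M + 2 * ν := by
      have := hF_nonneg wbar
      have := hF_le wstar
      linarith
    have hr2 : r wbar j ≤ (M + 2 * ν) / B := by
      rw [le_div_iff₀ hB]
      linarith [hr]
    have := hgen₃ j
    linarith
end

section
/- (Exponentiated-gradient regret bound for the dual player, used in the proof of Theorem 1.) Let Z and T be positive integers, B > 0, η > 0, ρ ≥ 0, and let r^1, …, r^T ∈ ℝ^Z satisfy |r^t_j| ≤ ρ for all t and j. Define θ^1 = 0 ∈ ℝ^Z, θ^{t+1}_j = θ^t_j + η r^t_j, and λ^t_j = B · exp(θ^t_j) / (1 + ∑_{j'=1}^Z exp(θ^t_{j'})). Then λ^t ∈ Λ_B for every t, and for every λ ∈ Λ_B, ∑_{t=1}^T ∑_{j=1}^Z λ_j r^t_j ≤ ∑_{t=1}^T ∑_{j=1}^Z λ^t_j r^t_j + B log(Z + 1)/η + η ρ² B T. -/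
/-!
Hedge over `Z + 1` experts, the extra one having `θ = 0` and reward `0`, has log-partition function
`Φ(θ) = log (1 + ∑ j, exp θ_j)`. Hoeffding's lemma, applied to the Hedge distribution, bounds each
increment `Φ(θ^{t+1}) - Φ(θ^t)` by `η ⟨λ^t / B, r^t⟩ + η²ρ²/2`. Telescoping from `Φ(0) = log (Z + 1)`
bounds `Φ(θ^T)`, and `Φ` dominates every `θ^T_j = η ∑_t r^t_j`, so `B Φ(θ^T) / η` bounds the reward
of any `λ ∈ Λ_B`.
-/

open Real MeasureTheory ProbabilityTheory

lemma sum_mul_exp_le_of_mem_Icc {ι : Type*} [Fintype ι] {p x : ι → ℝ} (hp : ∀ i, 0 ≤ p i)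
    (hp1 : ∑ i, p i = 1) {a b : ℝ} (hx : ∀ i, x i ∈ Set.Icc a b) (s : ℝ) :
    ∑ i, p i * exp (s * x i) ≤ exp (s * ∑ i, p i * x i + (b - a) ^ 2 * s ^ 2 / 8) := by
  let _ : MeasurableSpace ι := ⊤
  set μ : Measure ι := ∑ i, ENNReal.ofReal (p i) • Measure.dirac i
  have hμ : ∀ f : ι → ℝ, ∫ ω, f ω ∂μ = ∑ i, p i * f i := by
    intro f
    rw [integral_finsetSum_measure fun i _ =>
      (integrable_dirac enorm_lt_top).smul_measure ENNReal.ofReal_ne_top]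
    simp [integral_smul_measure, integral_dirac, hp]
  have : IsProbabilityMeasure μ := ⟨by
    simp [μ, ← ENNReal.ofReal_sum_of_nonneg (fun i _ => hp i), hp1]⟩
  have h := (hasSubgaussianMGF_of_mem_Icc (X := x) (μ := μ) (a := a) (b := b)
    Measurable.of_discrete.aemeasurable (ae_of_all _ hx)).mgf_le s
  simp only [mgf, hμ] at h
  set m := ∑ i, p i * x i
  have hc : (((‖b - a‖₊ / 2) ^ 2 : NNReal) : ℝ) = (b - a) ^ 2 / 4 := by
    push_cast [coe_nnnorm, Real.norm_eq_abs, div_pow, sq_abs]; ring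
  have hshift : ∑ i, p i * exp (s * (x i - m)) = exp (-(s * m)) * ∑ i, p i * exp (s * x i) := by
    rw [Finset.mul_sum]
    refine Finset.sum_congr rfl fun i _ => ?_
    rw [mul_sub, sub_eq_add_neg, exp_add]; ring
  rw [hshift, hc, ← le_div_iff₀' (exp_pos _), ← exp_sub] at h
  refine h.trans_eq (congrArg exp ?_)
  ring

section Hedge

variable {ι : Type*} [Fintype ι]

noncomputable def hedgePotential (θ : ι → ℝ) : ℝ := log (1 + ∑ i, exp (θ i))

noncomputable def hedgeWeight (θ : ι → ℝ) (i : ι) : ℝ := exp (θ i) / (1 + ∑ j, exp (θ j))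

lemma one_add_sum_exp_pos (θ : ι → ℝ) : 0 < 1 + ∑ i, exp (θ i) := by positivity

lemma hedgeWeight_nonneg (θ : ι → ℝ) (i : ι) : 0 ≤ hedgeWeight θ i := by
  unfold hedgeWeight; positivity

lemma sum_hedgeWeight_le_one (θ : ι → ℝ) : ∑ i, hedgeWeight θ i ≤ 1 := by
  simp only [hedgeWeight, ← Finset.sum_div]
  rw [div_le_one (one_add_sum_exp_pos θ)]
  exact le_add_of_nonneg_left zero_le_one

lemma le_hedgePotential (θ : ι → ℝ) (i : ι) : θ i ≤ hedgePotential θ := by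
  rw [hedgePotential, ← log_exp (θ i)]
  refine log_le_log (exp_pos _) ?_
  have := Finset.single_le_sum (fun j _ => (exp_pos (θ j)).le) (Finset.mem_univ i)
  linarith

lemma hedgePotential_nonneg (θ : ι → ℝ) : 0 ≤ hedgePotential θ :=
  log_nonneg (le_add_of_nonneg_right (by positivity))

lemma hedgePotential_zero : hedgePotential (0 : ι → ℝ) = log (Fintype.card ι + 1) := by
  simp [hedgePotential, add_comm]

lemma sum_mul_le_mul_hedgePotential {θ lam : ι → ℝ} {B : ℝ} (hlam : ∀ i, 0 ≤ lam i)
    (hB : ∑ i, lam i ≤ B) : ∑ i, lam i * θ i ≤ B * hedgePotential θ :=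
  calc ∑ i, lam i * θ i ≤ ∑ i, lam i * hedgePotential θ :=
        Finset.sum_le_sum fun i _ => mul_le_mul_of_nonneg_left (le_hedgePotential θ i) (hlam i)
    _ = (∑ i, lam i) * hedgePotential θ := (Finset.sum_mul ..).symm
    _ ≤ B * hedgePotential θ := mul_le_mul_of_nonneg_right hB (hedgePotential_nonneg θ)

lemma hedgePotential_add_le {ρ : ℝ} (hρ : 0 ≤ ρ) (θ x : ι → ℝ) (hx : ∀ i, |x i| ≤ ρ) (s : ℝ) :
    hedgePotential (fun i => θ i + s * x i) ≤
      hedgePotential θ + s * ∑ i, hedgeWeight θ i * x i + s ^ 2 * ρ ^ 2 / 2 := by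
  set S := 1 + ∑ i, exp (θ i)
  -- the extra expert carries the missing mass `1 / S` of the Hedge weights
  have hS : 0 < S := one_add_sum_exp_pos θ
  let q : Option ι → ℝ := fun o => o.elim (1 / S) (hedgeWeight θ)
  let y : Option ι → ℝ := fun o => o.elim 0 x
  have hq : ∀ o, 0 ≤ q o := by
    rintro (_ | i)
    · exact (one_div_pos.2 hS).le
    · exact hedgeWeight_nonneg θ i
  have hq1 : ∑ o, q o = 1 := by
    simp only [q, Fintype.sum_option, Option.elim, hedgeWeight, ← Finset.sum_div]
    rw [← add_div, div_self hS.ne']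
  have hy : ∀ o, y o ∈ Set.Icc (-ρ) ρ := by
    rintro (_ | i)
    · exact ⟨neg_nonpos.2 hρ, hρ⟩
    · exact abs_le.1 (hx i)
  have h := sum_mul_exp_le_of_mem_Icc hq hq1 hy s
  simp only [q, y, Fintype.sum_option, Option.elim, mul_zero, exp_zero, mul_one, zero_add] at h
  have hlhs : 1 / S + ∑ i, hedgeWeight θ i * exp (s * x i) =
      (1 + ∑ i, exp (θ i + s * x i)) / S := by
    simp only [hedgeWeight, exp_add, div_mul_eq_mul_div, add_div, Finset.sum_div]
    rfl
  rw [hlhs, div_le_iff₀' hS] at h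
  calc hedgePotential (fun i => θ i + s * x i)
      ≤ log (S * exp (s * ∑ i, hedgeWeight θ i * x i + (ρ - -ρ) ^ 2 * s ^ 2 / 8)) :=
        log_le_log (one_add_sum_exp_pos _) h
    _ = hedgePotential θ + s * ∑ i, hedgeWeight θ i * x i + s ^ 2 * ρ ^ 2 / 2 := by
        rw [log_mul hS.ne' (exp_pos _).ne', log_exp, hedgePotential]
        ring

end Hedge

theorem stmt_5_general {Z T : ℕ}
    {B η ρ : ℝ} (hB : 0 < B) (hη : 0 < η) (hρ : 0 ≤ ρ)
    (r : ℕ → Fin Z → ℝ) (hr : ∀ t < T, ∀ j, |r t j| ≤ ρ)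
    (θ : ℕ → Fin Z → ℝ)
    (hθ0 : ∀ j, θ 0 j = 0)
    (hθ : ∀ t j, θ (t + 1) j = θ t j + η * r t j)
    (lam : ℕ → Fin Z → ℝ)
    (hlam : ∀ t j, lam t j =
      B * Real.exp (θ t j) / (1 + ∑ j', Real.exp (θ t j'))) :
    (∀ t, (∀ j, 0 ≤ lam t j) ∧ ∑ j, lam t j ≤ B) ∧
    ∀ lam' : Fin Z → ℝ, (∀ j, 0 ≤ lam' j) → (∑ j, lam' j ≤ B) →
      ∑ t ∈ Finset.range T, ∑ j, lam' j * r t j ≤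
        (∑ t ∈ Finset.range T, ∑ j, lam t j * r t j) +
          B * Real.log (Z + 1) / η + η * ρ ^ 2 * B * T := by
  have hlam_eq : ∀ t j, lam t j = B * hedgeWeight (θ t) j := fun t j => by
    rw [hlam, hedgeWeight, mul_div_assoc]
  have hθ_eq : ∀ n j, θ n j = η * ∑ t ∈ Finset.range n, r t j := fun n j => by
    induction n with
    | zero => simp [hθ0]
    | succ n ih => rw [hθ, ih, Finset.sum_range_succ]; ring
  have hstep : ∀ t < T, hedgePotential (θ (t + 1)) - hedgePotential (θ t) ≤
      η * ∑ j, hedgeWeight (θ t) j * r t j + η ^ 2 * ρ ^ 2 / 2 := fun t ht => by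
    rw [show θ (t + 1) = fun j => θ t j + η * r t j from funext (hθ t)]
    linarith [hedgePotential_add_le hρ (θ t) (r t) (hr t ht) η]
  have hpot : hedgePotential (θ T) ≤ log (Z + 1) +
      ∑ t ∈ Finset.range T, (η * ∑ j, hedgeWeight (θ t) j * r t j + η ^ 2 * ρ ^ 2 / 2) := by
    have := Finset.sum_le_sum fun t ht => hstep t (Finset.mem_range.1 ht)
    rw [Finset.sum_range_sub (fun t => hedgePotential (θ t)), show θ 0 = 0 from funext hθ0, hedgePotential_zero,
      Fintype.card_fin] at this
    linarith
  refine ⟨fun t => ⟨fun j => ?_, ?_⟩, fun lam' hlam'_nonneg hlam'_sum => ?_⟩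
  · rw [hlam_eq]; exact mul_nonneg hB.le (hedgeWeight_nonneg _ _)
  · simpa only [hlam_eq, ← Finset.mul_sum] using
      mul_le_of_le_one_right hB.le (sum_hedgeWeight_le_one (θ t))
  calc ∑ t ∈ Finset.range T, ∑ j, lam' j * r t j = (∑ j, lam' j * θ T j) / η := by
        simp only [hθ_eq, Finset.sum_div, Finset.mul_sum]
        rw [Finset.sum_comm]
        field_simp
    _ ≤ B * hedgePotential (θ T) / η := by
        gcongr; exact sum_mul_le_mul_hedgePotential hlam'_nonneg hlam'_sum
    _ ≤ B * (log (Z + 1) + ∑ t ∈ Finset.range T,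
          (η * ∑ j, hedgeWeight (θ t) j * r t j + η ^ 2 * ρ ^ 2 / 2)) / η := by
        gcongr
    _ = (∑ t ∈ Finset.range T, ∑ j, lam t j * r t j) +
          B * log (Z + 1) / η + η * ρ ^ 2 * B * T / 2 := by
        simp only [hlam_eq, Finset.sum_add_distrib, Finset.sum_const, Finset.card_range,
          nsmul_eq_mul, mul_assoc, ← Finset.mul_sum]
        field_simp
        ring
    _ ≤ _ := by
        have : 0 ≤ η * ρ ^ 2 * B * T := by positivity
        linarith

/-- Exponentiated-gradient (Hedge) regret bound for the dual player, used in
the proof of Theorem 1. The rounds are indexed `t = 0, …, T-1` (so `θ 0 = 0`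
corresponds to `θ^1 = 0` in the paper). The iterates
`λ^t_j = B exp(θ^t_j)/(1 + ∑_{j'} exp(θ^t_{j'}))` lie in `Λ_B`, and for every
`λ ∈ Λ_B`,
`∑_t ⟨λ, r^t⟩ ≤ ∑_t ⟨λ^t, r^t⟩ + B log(Z+1)/η + η ρ² B T`. -/
theorem stmt_5 {Z T : ℕ} (hZ : 0 < Z) (hT : 0 < T)
    {B η ρ : ℝ} (hB : 0 < B) (hη : 0 < η) (hρ : 0 ≤ ρ)
    (r : ℕ → Fin Z → ℝ) (hr : ∀ t < T, ∀ j, |r t j| ≤ ρ)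
    (θ : ℕ → Fin Z → ℝ)
    (hθ0 : ∀ j, θ 0 j = 0)
    (hθ : ∀ t j, θ (t + 1) j = θ t j + η * r t j)
    (lam : ℕ → Fin Z → ℝ)
    (hlam : ∀ t j, lam t j =
      B * Real.exp (θ t j) / (1 + ∑ j', Real.exp (θ t j'))) :
    (∀ t, (∀ j, 0 ≤ lam t j) ∧ ∑ j, lam t j ≤ B) ∧
    ∀ lam' : Fin Z → ℝ, (∀ j, 0 ≤ lam' j) → (∑ j, lam' j ≤ B) →
      ∑ t ∈ Finset.range T, ∑ j, lam' j * r t j ≤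
        (∑ t ∈ Finset.range T, ∑ j, lam t j * r t j) +
          B * Real.log (Z + 1) / η + η * ρ ^ 2 * B * T :=
  stmt_5_general hB hη hρ r hr θ hθ0 hθ lam hlam
end

section
/- (Regret-to-saddle-point conversion, the deterministic core of Theorem 1.) Let W be a nonempty convex subset of ℝ^p, Z a positive integer, B > 0, F : W → ℝ convex, and r_1, …, r_Z : W → ℝ convex; let G(w, λ) = F(w) + ∑_{j=1}^Z λ_j r_j(w) for λ ∈ Λ_B. Let N be a positive integer and w^1, …, w^N ∈ W, λ^1, …, λ^N ∈ Λ_B, and set w̄ = (1/N) ∑_{t=1}^N w^t and λ̄ = (1/N) ∑_{t=1}^N λ^t. Suppose there are ν₁, ν₂ ≥ 0 such that (1/N) ∑_{t=1}^N G(w^t, λ^t) − (1/N) ∑_{t=1}^N G(w, λ^t) ≤ ν₁ for every w ∈ W, and (1/N) ∑_{t=1}^N ∑_j λ_j r_j(w^t) − (1/N) ∑_{t=1}^N ∑_j λ^t_j r_j(w^t) ≤ ν₂ for every λ ∈ Λ_B. Then G(w̄, λ) − G(w, λ̄) ≤ ν₁ + ν₂ for all w ∈ W and λ ∈ Λ_B;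 in particular, (w̄, λ̄) is a (ν₁ + ν₂)-approximate saddle point of G. -/
/-!
Both coordinates are averaged, but only the primal one pays for it: `G(·, λ)` is convex,
so Jensen gives `G(w̄, λ) ≤ (1/N) ∑ₜ G(wᵗ, λ)`, while `G(w, ·)` is affine, so
`G(w, λ̄) = (1/N) ∑ₜ G(w, λᵗ)` exactly. Inserting `(1/N) ∑ₜ G(wᵗ, λᵗ)` splits
`G(w̄, λ) − G(w, λ̄)` into the dual regret (the `F`-terms cancel) plus the primal regret.
-/

open Finset

theorem ConvexOn.sum {𝕜 E β ι : Type*} [Semiring 𝕜] [PartialOrder 𝕜] [AddCommMonoid E]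
    [AddCommMonoid β] [PartialOrder β] [IsOrderedAddMonoid β] [SMul 𝕜 E] [Module 𝕜 β]
    {s : Set E} (hs : Convex 𝕜 s) {t : Finset ι} {f : ι → E → β}
    (hf : ∀ i ∈ t, ConvexOn 𝕜 s (f i)) : ConvexOn 𝕜 s fun x => ∑ i ∈ t, f i x := by
  have h := Finset.sum_induction f (ConvexOn 𝕜 s) (fun _ _ => ConvexOn.add)
    (convexOn_const 0 hs) hf
  simpa only [Finset.sum_fn] using h

section Average

variable {𝕜 ι : Type*} [Field 𝕜] {t : Finset ι}

theorem ConvexOn.map_inv_card_smul_sum_le [LinearOrder 𝕜] [IsStrictOrderedRing 𝕜]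
    {E β : Type*} [AddCommGroup E] [AddCommGroup β]
    [PartialOrder β] [IsOrderedAddMonoid β] [Module 𝕜 E] [Module 𝕜 β]
    [IsStrictOrderedModule 𝕜 β] {s : Set E} {f : E → β} (hf : ConvexOn 𝕜 s f)
    (ht : t.Nonempty) {p : ι → E} (hmem : ∀ i ∈ t, p i ∈ s) :
    f ((#t : 𝕜)⁻¹ • ∑ i ∈ t, p i) ≤ (#t : 𝕜)⁻¹ • ∑ i ∈ t, f (p i) := by
  have hweights : ∑ _i ∈ t, (#t : 𝕜)⁻¹ = 1 := by
    rw [sum_const, nsmul_eq_mul, mul_inv_cancel₀ (Nat.cast_ne_zero.mpr ht.card_ne_zero)]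
  simpa only [smul_sum] using
    hf.map_sum_le (fun _ _ => inv_nonneg.mpr (Nat.cast_nonneg _)) hweights hmem

theorem add_sum_mul_average_eq [CharZero 𝕜] {κ : Type*} [Fintype κ] (ht : t.Nonempty)
    (c : 𝕜) (a : κ → 𝕜) (lam : ι → κ → 𝕜) :
    c + ∑ j, ((#t : 𝕜)⁻¹ • ∑ i ∈ t, lam i) j * a j =
      (#t : 𝕜)⁻¹ * ∑ i ∈ t, (c + ∑ j, lam i j * a j) := by
  have hcard : (#t : 𝕜) ≠ 0 := Nat.cast_ne_zero.mpr ht.card_ne_zero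
  simp only [sum_add_distrib, sum_const, nsmul_eq_mul, Pi.smul_apply, Finset.sum_apply,
    smul_eq_mul, mul_add, ← mul_assoc, inv_mul_cancel₀ hcard, one_mul, mul_sum, sum_mul]
  rw [sum_comm]

end Average

theorem stmt_6_general {p : ℕ} (W : Set (Fin p → ℝ))
    (hW_cvx : Convex ℝ W) {Z : ℕ} {B : ℝ}
    (F : (Fin p → ℝ) → ℝ) (hF : ConvexOn ℝ W F)
    (r : (Fin p → ℝ) → Fin Z → ℝ) (hr : ∀ j, ConvexOn ℝ W (fun w => r w j))
    (G : (Fin p → ℝ) → (Fin Z → ℝ) → ℝ)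
    (hG : ∀ w lam, G w lam = F w + ∑ j, lam j * r w j)
    {N : ℕ} (hN : 0 < N)
    (w : ℕ → (Fin p → ℝ)) (hw : ∀ t < N, w t ∈ W)
    (lam : ℕ → (Fin Z → ℝ))
    (wbar : Fin p → ℝ) (hwbar : wbar = (N : ℝ)⁻¹ • ∑ t ∈ Finset.range N, w t)
    (lambar : Fin Z → ℝ)
    (hlambar : lambar = (N : ℝ)⁻¹ • ∑ t ∈ Finset.range N, lam t)
    {ν₁ ν₂ : ℝ}
    (hregret_w : ∀ w' ∈ W,
      (N : ℝ)⁻¹ * ∑ t ∈ Finset.range N, G (w t) (lam t) -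
        (N : ℝ)⁻¹ * ∑ t ∈ Finset.range N, G w' (lam t) ≤ ν₁)
    (hregret_lam : ∀ lam' : Fin Z → ℝ, (∀ j, 0 ≤ lam' j) → (∑ j, lam' j ≤ B) →
      (N : ℝ)⁻¹ * ∑ t ∈ Finset.range N, ∑ j, lam' j * r (w t) j -
        (N : ℝ)⁻¹ * ∑ t ∈ Finset.range N, ∑ j, lam t j * r (w t) j ≤ ν₂) :
    ∀ w' ∈ W, ∀ lam' : Fin Z → ℝ, (∀ j, 0 ≤ lam' j) → (∑ j, lam' j ≤ B) →
      G wbar lam' - G w' lambar ≤ ν₁ + ν₂ := by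
  intro w' hw' lam' hlam'_nonneg hlam'_sum
  have hrange : (range N).Nonempty := nonempty_range_iff.mpr hN.ne'
  have hconvex : ConvexOn ℝ W fun x => G x lam' := by
    simp only [hG]
    exact hF.add (ConvexOn.sum hW_cvx fun j _ => by
      simpa only [smul_eq_mul] using (hr j).smul (hlam'_nonneg j))
  have hjensen : G wbar lam' ≤ (N : ℝ)⁻¹ * ∑ t ∈ range N, G (w t) lam' := by
    simpa only [card_range, smul_eq_mul, ← hwbar] using
      hconvex.map_inv_card_smul_sum_le hrange fun t ht => hw t (mem_range.mp ht)
  have haffine : G w' lambar = (N : ℝ)⁻¹ * ∑ t ∈ range N, G w' (lam t) := by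
    simpa only [card_range, ← hlambar, ← hG] using
      add_sum_mul_average_eq hrange (F w') (r w') lam
  have hdual : (N : ℝ)⁻¹ * ∑ t ∈ range N, G (w t) lam' -
      (N : ℝ)⁻¹ * ∑ t ∈ range N, G (w t) (lam t) ≤ ν₂ := by
    simp only [hG, sum_add_distrib]
    linarith [hregret_lam lam' hlam'_nonneg hlam'_sum]
  linarith [hregret_w w' hw']

/-- Regret-to-saddle-point conversion (the deterministic core of Theorem 1):
if the primal iterates `w^t ∈ W` have average regret at most `ν₁` against the
dual iterates `λ^t ∈ Λ_B`, and the dual iterates have average regret at most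
`ν₂`, then the averaged pair `(w̄, λ̄)` satisfies
`G(w̄, λ) − G(w, λ̄) ≤ ν₁ + ν₂` for every `w ∈ W` and `λ ∈ Λ_B`, i.e. it is a
`(ν₁ + ν₂)`-approximate saddle point of `G`. -/
theorem stmt_6 {p : ℕ} (W : Set (Fin p → ℝ)) (hW_ne : W.Nonempty)
    (hW_cvx : Convex ℝ W) {Z : ℕ} (hZ : 0 < Z) {B : ℝ} (hB : 0 < B)
    (F : (Fin p → ℝ) → ℝ) (hF : ConvexOn ℝ W F)
    (r : (Fin p → ℝ) → Fin Z → ℝ) (hr : ∀ j, ConvexOn ℝ W (fun w => r w j))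
    (G : (Fin p → ℝ) → (Fin Z → ℝ) → ℝ)
    (hG : ∀ w lam, G w lam = F w + ∑ j, lam j * r w j)
    {N : ℕ} (hN : 0 < N)
    (w : ℕ → (Fin p → ℝ)) (hw : ∀ t < N, w t ∈ W)
    (lam : ℕ → (Fin Z → ℝ))
    (hlam : ∀ t < N, (∀ j, 0 ≤ lam t j) ∧ ∑ j, lam t j ≤ B)
    (wbar : Fin p → ℝ) (hwbar : wbar = (N : ℝ)⁻¹ • ∑ t ∈ Finset.range N, w t)
    (lambar : Fin Z → ℝ)
    (hlambar : lambar = (N : ℝ)⁻¹ • ∑ t ∈ Finset.range N, lam t)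
    {ν₁ ν₂ : ℝ} (hν₁ : 0 ≤ ν₁) (hν₂ : 0 ≤ ν₂)
    (hregret_w : ∀ w' ∈ W,
      (N : ℝ)⁻¹ * ∑ t ∈ Finset.range N, G (w t) (lam t) -
        (N : ℝ)⁻¹ * ∑ t ∈ Finset.range N, G w' (lam t) ≤ ν₁)
    (hregret_lam : ∀ lam' : Fin Z → ℝ, (∀ j, 0 ≤ lam' j) → (∑ j, lam' j ≤ B) →
      (N : ℝ)⁻¹ * ∑ t ∈ Finset.range N, ∑ j, lam' j * r (w t) j -
        (N : ℝ)⁻¹ * ∑ t ∈ Finset.range N, ∑ j, lam t j * r (w t) j ≤ ν₂) :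
    ∀ w' ∈ W, ∀ lam' : Fin Z → ℝ, (∀ j, 0 ≤ lam' j) → (∑ j, lam' j ≤ B) →
      G wbar lam' - G w' lambar ≤ ν₁ + ν₂ :=
  stmt_6_general W hW_cvx F hF r hr G hG hN w hw lam wbar hwbar lambar hlambar hregret_w hregret_lam
end

section
/- (Theorem 1, deterministic form: duality-gap bound for PFFL with exponentiated-gradient dual updates.) Let W be a nonempty convex subset of ℝ^p, Z a positive integer, B > 0, ρ ≥ 0, η > 0, F : W → ℝ convex, and r_1, …, r_Z : W → ℝ convex with |r_j(w)| ≤ ρ for all w ∈ W and all j; let G(w, λ) = F(w) + ∑_{j=1}^Z λ_j r_j(w) for λ ∈ Λ_B. Let N be a positive integer, w^1, …, w^N ∈ W, and define the dual iterates by θ^1 = 0 ∈ ℝ^Z, θ^{t+1}_j = θ^t_j + η r_j(w^t), λ^t_j = B · exp(θ^t_j)/(1 + ∑_{j'} exp(θ^t_{j'})). Suppose there is A ≥ 0 such that (1/N) ∑_{t=1}^N G(w^t, λ^t) − (1/N) ∑_{t=1}^N G(w, λ^t) ≤ A for every w ∈ W (the primal player's average regret bound). Then, with w̄ = (1/N)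 ∑_t w^t and λ̄ = (1/N) ∑_t λ^t, for all w ∈ W and λ ∈ Λ_B: G(w̄, λ) − G(w, λ̄) ≤ A + B log(Z + 1)/(η N) + η ρ² B. -/
/-!
By convexity of `G(·, λ)` (Jensen) and linearity of `G(w, ·)`, the duality gap at the averaged
iterates is at most the primal player's average regret `A` plus `1/N` times the dual player's
regret against `λ`. The dual player runs Hedge on the `Z` constraints together with a dummy
constraint of value `0`. Its potential `Φ(θ) = log (1 + ∑ⱼ exp θⱼ)` starts at `log (Z + 1)`, grows
in step `t` by at most `η ⟨λᵗ, r(wᵗ)⟩ / B + η² ρ² / 2` (Hoeffding's lemma for the Hedge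
distribution), and dominates `⟨λ, θ⟩ / B` for every `λ ∈ Λ_B`; since `θᴺ = η ∑ₜ r(wᵗ)`, the dual
regret is at most `B log (Z + 1) / η + N η ρ² B / 2`.
-/

open Real Finset

open MeasureTheory ProbabilityTheory in
theorem sum_mul_exp_mul_le_of_mem_Icc {ι : Type*} [Fintype ι] {p x : ι → ℝ} (hp : ∀ i, 0 ≤ p i)
    (hp1 : ∑ i, p i = 1) {a b : ℝ} (hx : ∀ i, x i ∈ Set.Icc a b) (t : ℝ) :
    ∑ i, p i * exp (t * x i) ≤ exp (t * ∑ i, p i * x i + (b - a) ^ 2 * t ^ 2 / 8) := by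
  let _ : MeasurableSpace ι := ⊤
  let P : PMF ι := PMF.ofFintype (fun i => ENNReal.ofReal (p i)) <| by
    rw [← ENNReal.ofReal_sum_of_nonneg fun i _ => hp i, hp1, ENNReal.ofReal_one]
  have hint : ∀ f : ι → ℝ, ∫ i, f i ∂P.toMeasure = ∑ i, p i * f i := fun f => by
    simp [P, PMF.integral_eq_sum, ENNReal.toReal_ofReal (hp _)]
  have h := (hasSubgaussianMGF_of_mem_Icc (X := x) (μ := P.toMeasure)
    (measurable_of_countable x).aemeasurable (Filter.Eventually.of_forall hx)).mgf_le t
  simp only [mgf, hint] at h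
  set m := ∑ i, p i * x i
  have hc : ((‖b - a‖₊ / 2) ^ 2 : NNReal) * t ^ 2 / 2 = (b - a) ^ 2 * t ^ 2 / 8 := by
    push_cast
    rw [Real.norm_eq_abs, div_pow, sq_abs]
    ring
  have hshift : ∑ i, p i * exp (t * (x i - m)) = exp (-(t * m)) * ∑ i, p i * exp (t * x i) := by
    rw [mul_sum]
    refine sum_congr rfl fun i _ => ?_
    rw [mul_sub, sub_eq_add_neg, exp_add]
    ring
  rwa [hshift, hc, ← le_div_iff₀' (exp_pos _), div_eq_mul_inv, ← exp_neg, neg_neg, ← exp_add,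
    add_comm] at h

theorem convexOn_finsetSum {E ι : Type*} [AddCommMonoid E] [Module ℝ E] {s : Set E}
    (hs : Convex ℝ s) {t : Finset ι} {f : ι → E → ℝ} (hf : ∀ i ∈ t, ConvexOn ℝ s (f i)) :
    ConvexOn ℝ s (fun x => ∑ i ∈ t, f i x) := by
  refine ⟨hs, fun x hx y hy a b ha hb hab => ?_⟩
  simp only [smul_eq_mul, mul_sum, ← sum_add_distrib]
  exact sum_le_sum fun i hi => (hf i hi).2 hx hy ha hb hab

noncomputable section

def lagrangian {E ι : Type*} [Fintype ι] (F : E → ℝ) (r : E → ι → ℝ) (w : E) (lam : ι → ℝ) :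
    ℝ :=
  F w + ∑ j, lam j * r w j

section Lagrangian

variable {E ι : Type*} [Fintype ι] {F : E → ℝ} {r : E → ι → ℝ}

lemma convexOn_lagrangian [AddCommGroup E] [Module ℝ E] {W : Set E} (hF : ConvexOn ℝ W F)
    (hr : ∀ j, ConvexOn ℝ W (fun w => r w j))
    {lam : ι → ℝ} (hlam : ∀ j, 0 ≤ lam j) : ConvexOn ℝ W (fun w => lagrangian F r w lam) :=
  hF.add <| convexOn_finsetSum hF.1 fun j _ => by
    simpa only [smul_eq_mul] using (hr j).smul (hlam j)

lemma lagrangian_sub_lagrangian (w : E) (lam lam' : ι → ℝ) :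
    lagrangian F r w lam' - lagrangian F r w lam = ∑ j, (lam' j - lam j) * r w j := by
  simp only [lagrangian, sub_mul, sum_sub_distrib]
  ring

lemma lagrangian_smul_sum {κ : Type*} (w : E) {s : Finset κ} (lam : κ → ι → ℝ) (c : ℝ)
    (hc : c * #s = 1) :
    lagrangian F r w (c • ∑ t ∈ s, lam t) = c * ∑ t ∈ s, lagrangian F r w (lam t) := by
  simp only [lagrangian, sum_add_distrib, sum_const, nsmul_eq_mul, mul_add, ← mul_assoc, hc,
    one_mul]
  congr 1
  simp only [Pi.smul_apply, Finset.sum_apply, smul_eq_mul, mul_sum, sum_mul]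
  rw [sum_comm]
  exact sum_congr rfl fun j _ => sum_congr rfl fun t _ => by ring

theorem lagrangian_gap_le [AddCommGroup E] [Module ℝ E] {W : Set E} (hF : ConvexOn ℝ W F)
    (hr : ∀ j, ConvexOn ℝ W (fun w => r w j)) {N : ℕ} (hN : N ≠ 0) {w : ℕ → E}
    (hw : ∀ t < N, w t ∈ W) (lam : ℕ → ι → ℝ) {lam' : ι → ℝ} (hlam' : ∀ j, 0 ≤ lam' j) (w' : E) :
    lagrangian F r ((N : ℝ)⁻¹ • ∑ t ∈ range N, w t) lam' -
        lagrangian F r w' ((N : ℝ)⁻¹ • ∑ t ∈ range N, lam t) ≤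
      ((N : ℝ)⁻¹ * ∑ t ∈ range N, lagrangian F r (w t) (lam t) -
          (N : ℝ)⁻¹ * ∑ t ∈ range N, lagrangian F r w' (lam t)) +
        (N : ℝ)⁻¹ * ∑ t ∈ range N, ∑ j, (lam' j - lam t j) * r (w t) j := by
  have hN' : (N : ℝ)⁻¹ * #(range N) = 1 := by simp [hN]
  have hjensen : lagrangian F r ((N : ℝ)⁻¹ • ∑ t ∈ range N, w t) lam' ≤
      (N : ℝ)⁻¹ * ∑ t ∈ range N, lagrangian F r (w t) lam' := by
    have := (convexOn_lagrangian hF hr hlam').map_sum_le (t := range N) (w := fun _ => (N : ℝ)⁻¹)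
      (fun _ _ => by positivity) (by simpa [mul_comm] using hN') fun t ht => hw t (mem_range.1 ht)
    simpa only [smul_sum, smul_eq_mul, mul_sum] using this
  have hdiff : ∑ t ∈ range N, ∑ j, (lam' j - lam t j) * r (w t) j =
      ∑ t ∈ range N, lagrangian F r (w t) lam' - ∑ t ∈ range N, lagrangian F r (w t) (lam t) := by
    rw [← sum_sub_distrib]
    exact sum_congr rfl fun t _ => (lagrangian_sub_lagrangian (w t) (lam t) lam').symm
  rw [lagrangian_smul_sum w' lam _ hN', hdiff]
  linarith

end Lagrangian

lemma eq_mul_sum_of_succ_eq {ι : Type*} {g θ : ℕ → ι → ℝ} {η : ℝ} (hθ0 : ∀ j, θ 0 j = 0)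
    (hθ : ∀ t j, θ (t + 1) j = θ t j + η * g t j)
    (N : ℕ) (j : ι) : θ N j = η * ∑ t ∈ range N, g t j := by
  induction N with
  | zero => simp [hθ0]
  | succ n ih => rw [hθ, ih, sum_range_succ, mul_add]

namespace Hedge
variable {ι : Type*} [Fintype ι]

def potential (θ : ι → ℝ) : ℝ := log (1 + ∑ j, exp (θ j))

/-- Exponential weights over `ι` plus a dummy expert of score `0` (the `1 +`), so that the weights
sum to less than `1` and `B • weights θ` ranges over `Λ_B`. -/
def weights (θ : ι → ℝ) (j : ι) : ℝ := exp (θ j) / (1 + ∑ j', exp (θ j'))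

lemma potential_zero : potential (0 : ι → ℝ) = log (Fintype.card ι + 1) := by
  simp [potential, add_comm]

lemma le_potential (θ : ι → ℝ) (j : ι) : θ j ≤ potential θ := by
  rw [← log_exp (θ j)]
  refine log_le_log (exp_pos _) ?_
  have := single_le_sum (fun j' _ => (exp_pos (θ j')).le) (mem_univ j)
  linarith

lemma potential_nonneg (θ : ι → ℝ) : 0 ≤ potential θ := by
  refine log_nonneg ?_
  have : 0 ≤ ∑ j, exp (θ j) := by positivity
  linarith

lemma sum_mul_le_mul_potential (θ : ι → ℝ) {lam : ι → ℝ} (hlam : ∀ j, 0 ≤ lam j) {B : ℝ}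
    (hB : ∑ j, lam j ≤ B) : ∑ j, lam j * θ j ≤ B * potential θ :=
  calc ∑ j, lam j * θ j ≤ ∑ j, lam j * potential θ :=
        sum_le_sum fun j _ => mul_le_mul_of_nonneg_left (le_potential θ j) (hlam j)
    _ = (∑ j, lam j) * potential θ := by rw [sum_mul]
    _ ≤ B * potential θ := mul_le_mul_of_nonneg_right hB (potential_nonneg θ)

/-- Hoeffding's lemma for the weights extended to `Option ι`, the dummy expert being `none`. -/
lemma potential_add_le (θ : ι → ℝ) {g : ι → ℝ} {ρ : ℝ} (hρ : 0 ≤ ρ) (hg : ∀ j, |g j| ≤ ρ)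
    (η : ℝ) :
    potential (fun j => θ j + η * g j) ≤
      potential θ + η * ∑ j, weights θ j * g j + η ^ 2 * ρ ^ 2 / 2 := by
  set S := 1 + ∑ j, exp (θ j)
  have hS : 0 < S := by positivity
  have hsum (f : ι → ℝ) : ∑ o : Option ι, exp (o.elim 0 f) = 1 + ∑ j, exp (f j) := by
    simp [Fintype.sum_option]
  have hoeff := sum_mul_exp_mul_le_of_mem_Icc (p := fun o : Option ι => exp (o.elim 0 θ) / S)
    (x := fun o : Option ι => o.elim 0 g)
    (a := -ρ) (b := ρ) (fun _ => by positivity) (by rw [← sum_div, hsum, div_self hS.ne'])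
    (fun o => by cases o <;> simp [hρ, ← abs_le, hg]) η
  have hlhs : ∑ o : Option ι, exp (o.elim 0 θ) / S * exp (η * o.elim 0 g) =
      (1 + ∑ j, exp (θ j + η * g j)) / S := by
    rw [← hsum, sum_div]
    refine sum_congr rfl fun o _ => ?_
    cases o <;> simp [exp_add, div_mul_eq_mul_div]
  have hmean : ∑ o : Option ι, exp (o.elim 0 θ) / S * o.elim 0 g = ∑ j, weights θ j * g j := by
    simp [Fintype.sum_option, weights, S]
  rw [hlhs, hmean, div_le_iff₀ hS] at hoeff
  calc potential (fun j => θ j + η * g j)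
      ≤ log (exp (η * ∑ j, weights θ j * g j + (ρ - -ρ) ^ 2 * η ^ 2 / 8) * S) :=
        log_le_log (by positivity) hoeff
    _ = potential θ + η * ∑ j, weights θ j * g j + η ^ 2 * ρ ^ 2 / 2 := by
        rw [log_mul (exp_pos _).ne' hS.ne', log_exp, potential]
        ring

variable {g : ℕ → ι → ℝ} {θ : ℕ → ι → ℝ} {η ρ : ℝ}

lemma potential_le_of_succ_eq (hθ0 : ∀ j, θ 0 j = 0)
    (hθ : ∀ t j, θ (t + 1) j = θ t j + η * g t j) (hρ : 0 ≤ ρ) {N : ℕ}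
    (hg : ∀ t < N, ∀ j, |g t j| ≤ ρ) :
    potential (θ N) ≤ log (Fintype.card ι + 1) +
      ∑ t ∈ range N, (η * ∑ j, weights (θ t) j * g t j + η ^ 2 * ρ ^ 2 / 2) := by
  induction N with
  | zero => simp [show θ 0 = 0 from funext hθ0, potential_zero]
  | succ n ih =>
    rw [sum_range_succ, ← add_assoc, show θ (n + 1) = fun j => θ n j + η * g n j from
      funext (hθ n)]
    grw [potential_add_le (θ n) hρ (hg n n.lt_succ_self) η, ih fun t ht => hg t (by omega)]
    linarith

theorem regret_le (hθ0 : ∀ j, θ 0 j = 0) (hθ : ∀ t j, θ (t + 1) j = θ t j + η * g t j)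
    (hη : 0 < η) (hρ : 0 ≤ ρ) {N : ℕ} (hg : ∀ t < N, ∀ j, |g t j| ≤ ρ) {lam : ι → ℝ}
    (hlam : ∀ j, 0 ≤ lam j) {B : ℝ} (hB : ∑ j, lam j ≤ B) :
    ∑ t ∈ range N, ∑ j, (lam j - B * weights (θ t) j) * g t j ≤
      B * log (Fintype.card ι + 1) / η + N * (η * ρ ^ 2 * B / 2) := by
  have hB0 : 0 ≤ B := (sum_nonneg fun j _ => hlam j).trans hB
  set X := ∑ t ∈ range N, ∑ j, lam j * g t j
  set Y := ∑ t ∈ range N, ∑ j, weights (θ t) j * g t j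
  have hsplit : ∑ t ∈ range N, ∑ j, (lam j - B * weights (θ t) j) * g t j = X - B * Y := by
    simp only [X, Y, sub_mul, sum_sub_distrib, mul_sum, mul_assoc]
  have hX : η * X = ∑ j, lam j * θ N j := by
    simp only [X, eq_mul_sum_of_succ_eq hθ0 hθ N, mul_sum]
    rw [sum_comm]
    exact sum_congr rfl fun j _ => sum_congr rfl fun t _ => by ring
  have hpot := potential_le_of_succ_eq hθ0 hθ hρ hg
  rw [sum_add_distrib, ← mul_sum, sum_const, card_range,
    nsmul_eq_mul] at hpot
  have key : η * (X - B * Y) ≤ B * log (Fintype.card ι + 1) + N * (η ^ 2 * ρ ^ 2 * B / 2) := by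
    have := (sum_mul_le_mul_potential (θ N) hlam hB).trans (mul_le_mul_of_nonneg_left hpot hB0)
    rw [← hX] at this
    linarith
  rw [hsplit, ← mul_le_mul_iff_right₀ hη]
  refine key.trans_eq ?_
  field_simp

end Hedge

end

theorem stmt_7_general {p : ℕ} (W : Set (Fin p → ℝ)) {Z : ℕ}
    {B ρ η : ℝ} (hB : 0 < B) (hρ : 0 ≤ ρ) (hη : 0 < η)
    (F : (Fin p → ℝ) → ℝ) (hF : ConvexOn ℝ W F)
    (r : (Fin p → ℝ) → Fin Z → ℝ) (hr : ∀ j, ConvexOn ℝ W (fun w => r w j))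
    (hr_bdd : ∀ w ∈ W, ∀ j, |r w j| ≤ ρ)
    (G : (Fin p → ℝ) → (Fin Z → ℝ) → ℝ)
    (hG : ∀ w lam, G w lam = F w + ∑ j, lam j * r w j)
    {N : ℕ} (hN : 0 < N)
    (w : ℕ → (Fin p → ℝ)) (hw : ∀ t < N, w t ∈ W)
    (θ : ℕ → Fin Z → ℝ)
    (hθ0 : ∀ j, θ 0 j = 0)
    (hθ : ∀ t j, θ (t + 1) j = θ t j + η * r (w t) j)
    (lam : ℕ → Fin Z → ℝ)
    (hlam : ∀ t j, lam t j =
      B * Real.exp (θ t j) / (1 + ∑ j', Real.exp (θ t j')))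
    {A : ℝ}
    (hregret_w : ∀ w' ∈ W,
      (N : ℝ)⁻¹ * ∑ t ∈ Finset.range N, G (w t) (lam t) -
        (N : ℝ)⁻¹ * ∑ t ∈ Finset.range N, G w' (lam t) ≤ A)
    (wbar : Fin p → ℝ) (hwbar : wbar = (N : ℝ)⁻¹ • ∑ t ∈ Finset.range N, w t)
    (lambar : Fin Z → ℝ)
    (hlambar : lambar = (N : ℝ)⁻¹ • ∑ t ∈ Finset.range N, lam t) :
    ∀ w' ∈ W, ∀ lam' : Fin Z → ℝ, (∀ j, 0 ≤ lam' j) → (∑ j, lam' j ≤ B) →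
      G wbar lam' - G w' lambar ≤
        A + B * Real.log (Z + 1) / (η * N) + η * ρ ^ 2 * B := by
  intro w' hw' lam' hlam' hlamB
  obtain rfl : G = lagrangian F r := funext fun w => funext (hG w)
  subst hwbar hlambar
  have hlam_eq : ∀ t j, B * Hedge.weights (θ t) j = lam t j := fun t j => by
    rw [hlam, Hedge.weights, mul_div_assoc]
  have hdual := Hedge.regret_le (g := fun t => r (w t)) hθ0 hθ hη hρ
    (fun t ht => hr_bdd _ (hw t ht)) hlam' hlamB
  simp only [hlam_eq, Fintype.card_fin] at hdual
  have hN' : (0 : ℝ) < N := by exact_mod_cast hN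
  have hsplit : (N : ℝ)⁻¹ * (B * Real.log (Z + 1) / η + N * (η * ρ ^ 2 * B / 2)) =
      B * Real.log (Z + 1) / (η * N) + η * ρ ^ 2 * B / 2 := by
    field_simp
  calc _ ≤ A + (N : ℝ)⁻¹ * (B * Real.log (Z + 1) / η + N * (η * ρ ^ 2 * B / 2)) := by
        grw [lagrangian_gap_le hF hr hN.ne' hw lam hlam' w', hregret_w w' hw', hdual]
    _ ≤ A + B * Real.log (Z + 1) / (η * N) + η * ρ ^ 2 * B := by
        rw [hsplit]
        have : 0 ≤ η * ρ ^ 2 * B := by positivity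
        linarith

/-- Theorem 1 of the paper, deterministic form: duality-gap bound for PFFL
with exponentiated-gradient dual updates. If the primal iterates
`w^t ∈ W` (for `t = 0, …, N-1`) have average regret at most `A` against the
Hedge dual iterates `λ^t` (built from `θ 0 = 0`,
`θ^{t+1}_j = θ^t_j + η r_j(w^t)`, `λ^t_j = B exp(θ^t_j)/(1 + ∑_{j'} exp(θ^t_{j'}))`),
then the averaged iterates satisfy
`G(w̄, λ) − G(w, λ̄) ≤ A + B log(Z+1)/(η N) + η ρ² B` for all `w ∈ W`,
`λ ∈ Λ_B`. -/
theorem stmt_7 {p : ℕ} (W : Set (Fin p → ℝ)) (hW_ne : W.Nonempty)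
    (hW_cvx : Convex ℝ W) {Z : ℕ} (hZ : 0 < Z)
    {B ρ η : ℝ} (hB : 0 < B) (hρ : 0 ≤ ρ) (hη : 0 < η)
    (F : (Fin p → ℝ) → ℝ) (hF : ConvexOn ℝ W F)
    (r : (Fin p → ℝ) → Fin Z → ℝ) (hr : ∀ j, ConvexOn ℝ W (fun w => r w j))
    (hr_bdd : ∀ w ∈ W, ∀ j, |r w j| ≤ ρ)
    (G : (Fin p → ℝ) → (Fin Z → ℝ) → ℝ)
    (hG : ∀ w lam, G w lam = F w + ∑ j, lam j * r w j)
    {N : ℕ} (hN : 0 < N)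
    (w : ℕ → (Fin p → ℝ)) (hw : ∀ t < N, w t ∈ W)
    (θ : ℕ → Fin Z → ℝ)
    (hθ0 : ∀ j, θ 0 j = 0)
    (hθ : ∀ t j, θ (t + 1) j = θ t j + η * r (w t) j)
    (lam : ℕ → Fin Z → ℝ)
    (hlam : ∀ t j, lam t j =
      B * Real.exp (θ t j) / (1 + ∑ j', Real.exp (θ t j')))
    {A : ℝ} (hA : 0 ≤ A)
    (hregret_w : ∀ w' ∈ W,
      (N : ℝ)⁻¹ * ∑ t ∈ Finset.range N, G (w t) (lam t) -
        (N : ℝ)⁻¹ * ∑ t ∈ Finset.range N, G w' (lam t) ≤ A)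
    (wbar : Fin p → ℝ) (hwbar : wbar = (N : ℝ)⁻¹ • ∑ t ∈ Finset.range N, w t)
    (lambar : Fin Z → ℝ)
    (hlambar : lambar = (N : ℝ)⁻¹ • ∑ t ∈ Finset.range N, lam t) :
    ∀ w' ∈ W, ∀ lam' : Fin Z → ℝ, (∀ j, 0 ≤ lam' j) → (∑ j, lam' j ≤ B) →
      G wbar lam' - G w' lambar ≤
        A + B * Real.log (Z + 1) / (η * N) + η * ρ ^ 2 * B :=
  stmt_7_general W hB hρ hη F hF r hr hr_bdd G hG hN w hw θ hθ0 hθ lam hlam hregret_w wbar hwbar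
    lambar hlambar
end

section
/- (Arithmetic content of Corollary 1.) Let κ𝒞 ≥ 0, γ ≥ 1, ρ > 0, B > 0, ν > 0, Z a positive integer, and E a positive integer, and suppose ν(γ + 1) > 2κ𝒞. Set η_θ = ν/(2ρ²B) and let T be a real number with T ≥ (1/(ν(γ+1) − 2κ𝒞)) · (4ρ²B² log(Z+1)(γ+1)/(νE) + 2κ𝒞(γ−1)) and T ≥ 1. Then (κ𝒞/T)·(log(γ + T − 1) + 1 − log(γ + 1)) + B log(Z + 1)/(η_θ E T) + η_θ ρ² B ≤ ν. -/
/-!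
Bounding the harmonic-sum term `log(γ+T−1) + 1 − log(γ+1)` by `(γ+T−1)/(γ+1)` (from `log u ≤ u − 1`)
and using `η_θ ρ² B = ν/2`, it remains to show that the first two terms are at most `ν/2`.
After clearing the denominator `2T(γ+1)` this is linear in `T`, and it is exactly the assumed
lower bound on `T`.
-/

open Real

lemma Real.log_add_one_sub_log_le_div {x y : ℝ} (hx : 0 < x) (hy : 0 < y) :
    log x + 1 - log y ≤ x / y := by
  have := log_le_sub_one_of_pos (div_pos hx hy)
  rw [log_div hx.ne' hy.ne'] at this
  linarith

lemma div_mul_div_add_div_le_half {a γ D ν T : ℝ} (hγ : 0 < γ + 1) (hT : 0 < T)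
    (hs : 0 < ν * (γ + 1) - 2 * a)
    (hTs : (2 * (γ + 1) * D + 2 * a * (γ - 1)) / (ν * (γ + 1) - 2 * a) ≤ T) :
    a / T * ((γ + T - 1) / (γ + 1)) + D / T ≤ ν / 2 := by
  rw [div_le_iff₀ hs] at hTs
  rw [div_mul_div_comm, div_add_div _ _ (by positivity) hT.ne',
    div_le_div_iff₀ (by positivity) two_pos]
  nlinarith

theorem stmt_8_general {κC γ ρ B ν : ℝ} (hκC : 0 ≤ κC) (hγ : 1 ≤ γ)
    (hρ : 0 < ρ) (hB : 0 < B) (hν : 0 < ν)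
    {Z E : ℕ}
    (hslack : 2 * κC < ν * (γ + 1))
    (ηθ : ℝ) (hηθ : ηθ = ν / (2 * ρ ^ 2 * B))
    (T : ℝ) (hT1 : 1 ≤ T)
    (hT : T ≥ (1 / (ν * (γ + 1) - 2 * κC)) *
      (4 * ρ ^ 2 * B ^ 2 * Real.log (Z + 1) * (γ + 1) / (ν * E) +
        2 * κC * (γ - 1))) :
    κC / T * (Real.log (γ + T - 1) + 1 - Real.log (γ + 1)) +
      B * Real.log (Z + 1) / (ηθ * E * T) + ηθ * ρ ^ 2 * B ≤ ν := by
  set D := B * Real.log (Z + 1) / (ηθ * E)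
  have hηθ_mul : ηθ * ρ ^ 2 * B = ν / 2 := by
    rw [hηθ]
    field_simp
  have hD : 4 * ρ ^ 2 * B ^ 2 * Real.log (Z + 1) * (γ + 1) / (ν * E) = 2 * (γ + 1) * D := by
    simp only [D, hηθ, div_eq_mul_inv, mul_inv, inv_inv]
    ring
  rw [hD, one_div_mul_eq_div] at hT
  have hlog : Real.log (γ + T - 1) + 1 - Real.log (γ + 1) ≤ (γ + T - 1) / (γ + 1) :=
    Real.log_add_one_sub_log_le_div (by linarith) (by linarith)
  calc κC / T * (Real.log (γ + T - 1) + 1 - Real.log (γ + 1)) +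
        B * Real.log (Z + 1) / (ηθ * E * T) + ηθ * ρ ^ 2 * B
      ≤ κC / T * ((γ + T - 1) / (γ + 1)) + D / T + ν / 2 := by
        rw [hηθ_mul, div_div]
        gcongr
    _ ≤ ν / 2 + ν / 2 := by
        gcongr
        exact div_mul_div_add_div_le_half (by linarith) (by linarith) (by linarith) hT
    _ = ν := add_halves ν

/-- Arithmetic content of Corollary 1: with the step size
`η_θ = ν/(2ρ²B)` and `T` at least
`(4ρ²B² log(Z+1)(γ+1)/(νE) + 2κ𝒞(γ−1)) / (ν(γ+1) − 2κ𝒞)`, the duality-gap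
bound `(κ𝒞/T)(log(γ+T−1)+1−log(γ+1)) + B log(Z+1)/(η_θ E T) + η_θ ρ² B`
is at most `ν`. -/
theorem stmt_8 {κC γ ρ B ν : ℝ} (hκC : 0 ≤ κC) (hγ : 1 ≤ γ)
    (hρ : 0 < ρ) (hB : 0 < B) (hν : 0 < ν)
    {Z E : ℕ} (hZ : 0 < Z) (hE : 0 < E)
    (hslack : 2 * κC < ν * (γ + 1))
    (ηθ : ℝ) (hηθ : ηθ = ν / (2 * ρ ^ 2 * B))
    (T : ℝ) (hT1 : 1 ≤ T)
    (hT : T ≥ (1 / (ν * (γ + 1) - 2 * κC)) *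
      (4 * ρ ^ 2 * B ^ 2 * Real.log (Z + 1) * (γ + 1) / (ν * E) +
        2 * κC * (γ - 1))) :
    κC / T * (Real.log (γ + T - 1) + 1 - Real.log (γ + 1)) +
      B * Real.log (Z + 1) / (ηθ * E * T) + ηθ * ρ ^ 2 * B ≤ ν :=
  stmt_8_general hκC hγ hρ hB hν hslack ηθ hηθ T hT1 hT
end
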